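/- arXiv:1907.09067 — 2 statements merged into one kernel-verified Lean document; each statement's English description precedes it below -/
import Mathlib

section
/- Euclidean case of Lemma 4.2: let x, y, z, w, x', y', z', w' be points in the Euclidean plane with ‖x-y‖ = ‖x'-y'‖, ‖y-z‖ = ‖y'-z'‖, ‖z-w‖ = ‖z'-w'‖, ‖w-x‖ = ‖w'-x'‖, and ‖x'-z'‖ ≤ ‖x-z‖. If the segments [x', z'] and [y', w'] intersect, then ‖y-w‖ ≤ ‖y'-w'‖. -/
/-! If `[x', z']` meets `[y', w']` at `p = a • x' + b • z'`, put `q = a • x + b • z`. Stewart's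
theorem expresses `‖y - q‖²` through the side lengths, and the only term that differs from its
primed counterpart is `-a b ‖x - z‖²`; shortening the diagonal therefore can only lengthen it, so
`‖y - q‖ ≤ ‖y' - p‖` and likewise `‖w - q‖ ≤ ‖w' - p‖`. The triangle inequality through `q` and
`p ∈ [y', w']` give `‖y - w‖ ≤ ‖y' - p‖ + ‖p - w'‖ = ‖y' - w'‖`. -/

section Stewart

variable {E : Type*} [NormedAddCommGroup E] [InnerProductSpace ℝ E]

theorem norm_sub_smul_add_smul_sq (x y z : E) {a b : ℝ} (hab : a + b = 1) :
    ‖y - (a • x + b • z)‖ ^ 2 = a * ‖y - x‖ ^ 2 + b * ‖y - z‖ ^ 2 - a * b * ‖x - z‖ ^ 2 := by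
  obtain rfl : b = 1 - a := by linarith
  simp only [← real_inner_self_eq_norm_sq, inner_sub_left, inner_sub_right, inner_add_left,
    inner_add_right, real_inner_smul_left, real_inner_smul_right, real_inner_comm x y,
    real_inner_comm z y, real_inner_comm z x]
  ring

theorem norm_sub_smul_add_smul_le_of_norm_sub_le {x y z x' y' z' : E} {a b : ℝ}
    (ha : 0 ≤ a) (hb : 0 ≤ b) (hab : a + b = 1)
    (hx : ‖y - x‖ = ‖y' - x'‖) (hz : ‖y - z‖ = ‖y' - z'‖) (hxz : ‖x' - z'‖ ≤ ‖x - z‖) :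
    ‖y - (a • x + b • z)‖ ≤ ‖y' - (a • x' + b • z')‖ := by
  rw [← pow_le_pow_iff_left₀ (norm_nonneg _) (norm_nonneg _) two_ne_zero,
    norm_sub_smul_add_smul_sq _ _ _ hab, norm_sub_smul_add_smul_sq _ _ _ hab, hx, hz]
  have hxz_sq : ‖x' - z'‖ ^ 2 ≤ ‖x - z‖ ^ 2 := pow_le_pow_left₀ (norm_nonneg _) hxz 2
  nlinarith [mul_nonneg ha hb]

end Stewart

theorem stmt_11 (x y z w x' y' z' w' : EuclideanSpace ℝ (Fin 2))
    (h1 : ‖x - y‖ = ‖x' - y'‖) (h2 : ‖y - z‖ = ‖y' - z'‖)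
    (h3 : ‖z - w‖ = ‖z' - w'‖) (h4 : ‖w - x‖ = ‖w' - x'‖)
    (h5 : ‖x' - z'‖ ≤ ‖x - z‖)
    (hint : (segment ℝ x' z' ∩ segment ℝ y' w').Nonempty) :
    ‖y - w‖ ≤ ‖y' - w'‖ := by
  obtain ⟨p, ⟨a, b, ha, hb, hab, rfl⟩, hp⟩ := hint
  have hyx : ‖y - x‖ = ‖y' - x'‖ := by rw [norm_sub_rev, h1, norm_sub_rev]
  have hwz : ‖w - z‖ = ‖w' - z'‖ := by rw [norm_sub_rev, h3, norm_sub_rev]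
  calc ‖y - w‖ ≤ ‖y - (a • x + b • z)‖ + ‖w - (a • x + b • z)‖ := by
        rw [norm_sub_rev w]; exact norm_sub_le_norm_sub_add_norm_sub _ _ _
    _ ≤ ‖y' - (a • x' + b • z')‖ + ‖w' - (a • x' + b • z')‖ :=
        add_le_add (norm_sub_smul_add_smul_le_of_norm_sub_le ha hb hab hyx h2 h5)
          (norm_sub_smul_add_smul_le_of_norm_sub_le ha hb hab h4 hwz h5)
    _ = ‖y' - w'‖ := by
        rw [norm_sub_rev w', ← dist_eq_norm, ← dist_eq_norm, ← dist_eq_norm,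
          dist_add_dist_of_mem_segment hp]
end

section
/- Corollary of the 0-quadruple condition with inequalities (Corollary 5.3, κ = 0): let X be a metric space satisfying the 0-quadruple condition. For all x,y,z,w ∈ X and x',y',z',w' ∈ ℝ² with d(x,y) ≤ ‖x'-y'‖, d(y,z) ≤ ‖y'-z'‖, d(z,w) ≤ ‖z'-w'‖, d(w,x) ≤ ‖w'-x'‖, ‖x'-z'‖ ≤ d(x,z), and [x',z'] ∩ [y',w'] ≠ ∅, one has d(y,w) ≤ ‖y'-w'‖. -/
noncomputable def pt (s t : ℝ) : EuclideanSpace ℝ (Fin 2) :=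
  (WithLp.equiv 2 (Fin 2 → ℝ)).symm ![s, t]

lemma pt_sub (s t s' t' : ℝ) : pt s t - pt s' t' = pt (s - s') (t - t') := by
  rw [pt, pt, pt, WithLp.equiv_symm_apply, ← WithLp.toLp_sub]; congr 1; funext i; fin_cases i <;> simp

lemma pt_smul (r s t : ℝ) : r • pt s t = pt (r*s) (r*t) := by
  rw [pt, pt, WithLp.equiv_symm_apply, ← WithLp.toLp_smul]; congr 1; funext i; fin_cases i <;> simp

lemma pt_add (s t s' t' : ℝ) : pt s t + pt s' t' = pt (s + s') (t + t') := by
  rw [pt, pt, pt, WithLp.equiv_symm_apply, ← WithLp.toLp_add]; congr 1; funext i; fin_cases i <;> simp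

lemma norm_pt (s t : ℝ) : ‖pt s t‖ = Real.sqrt (s^2 + t^2) := by
  rw [EuclideanSpace.norm_eq]
  congr 1
  rw [Fin.sum_univ_two]
  simp [pt, WithLp.equiv_symm_apply, Real.norm_eq_abs, sq_abs]

lemma norm_pt_sub (s t s' t' : ℝ) :
    ‖pt s t - pt s' t'‖ = Real.sqrt ((s - s')^2 + (t - t')^2) := by
  rw [pt_sub, norm_pt]

lemma mem_seg_pt (s1 t1 s2 t2 l m : ℝ) (hl : 0 ≤ l) (hm : 0 ≤ m) (hlm : l + m = 1) :
    pt (l*s1 + m*s2) (l*t1 + m*t2) ∈ segment ℝ (pt s1 t1) (pt s2 t2) :=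
  ⟨l, m, hl, hm, hlm, by rw [pt_smul, pt_smul, pt_add]⟩

lemma stewart {E : Type*} [NormedAddCommGroup E] [InnerProductSpace ℝ E]
    (y x z : E) (t : ℝ) :
    ‖y - ((1-t) • x + t • z)‖^2
      = (1-t)*‖y-x‖^2 + t*‖y-z‖^2 - t*(1-t)*‖x-z‖^2 := by
  have h : y - ((1-t) • x + t • z) = (1-t) • (y-x) + t • (y-z) := by module
  have e2 : ‖x - z‖^2 = ‖y-x‖^2 - 2*(inner ℝ (y-x) (y-z) : ℝ) + ‖y-z‖^2 := by
    have h2 := @norm_sub_sq_real E _ _ (y-x) (y-z)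
    have h3 : (y-x) - (y-z) = z - x := by abel
    rw [h3] at h2
    rw [show ‖x - z‖ = ‖z - x‖ from norm_sub_rev x z, h2]
  have e1 : ‖(1-t) • (y-x) + t • (y-z)‖^2
      = (1-t)^2*‖y-x‖^2 + 2*((1-t)*t)*(inner ℝ (y-x) (y-z) : ℝ) + t^2*‖y-z‖^2 := by
    rw [norm_add_sq_real]
    rw [real_inner_smul_left, real_inner_smul_right, norm_smul, norm_smul]
    simp [Real.norm_eq_abs, mul_pow, sq_abs]
    ring
  rw [h, e1, e2]
  ring

lemma le_of_sq_le {r s : ℝ} (h : r^2 ≤ s^2) (hs : 0 ≤ s) : r ≤ s := by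
  have h1 := Real.sqrt_le_sqrt h
  rw [Real.sqrt_sq_eq_abs, Real.sqrt_sq hs] at h1
  exact le_trans (le_abs_self r) h1

lemma cs_bound {py qy aB d b : ℝ} (haB : 0 ≤ aB)
    (hy : py^2 + qy^2 = d^2) (hd : 0 ≤ d)
    (hb : Real.sqrt ((py-aB)^2 + qy^2) ≤ b) :
    d^2 - aB*py ≤ b*d := by
  set s := Real.sqrt ((py-aB)^2 + qy^2) with hs
  have hs0 : 0 ≤ s := Real.sqrt_nonneg _
  have hs2 : s^2 = (py-aB)^2 + qy^2 := Real.sq_sqrt (by positivity)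
  rcases le_or_gt (d^2 - aB*py) 0 with h|h
  · nlinarith [mul_nonneg (le_trans hs0 hb) hd]
  · have h2 : (d^2 - aB*py)^2 ≤ (s*d)^2 := by nlinarith [sq_nonneg (aB*qy)]
    have h3 : d^2 - aB*py ≤ s*d := le_of_sq_le h2 (mul_nonneg hs0 hd)
    nlinarith [mul_le_mul_of_nonneg_right hb hd]

lemma key_neg {py pw qy qw dxy dwx : ℝ}
    (hqy : 0 ≤ qy) (hqw : 0 ≤ qw)
    (hy : py^2 + qy^2 = dxy^2) (hw : pw^2 + qw^2 = dwx^2)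
    (hdxy : 0 < dxy) (hdwx : 0 < dwx)
    (hN : py*qw + pw*qy < 0) :
    py*dwx + pw*dxy ≤ 0 := by
  have hcase : py < 0 ∨ pw < 0 := by
    by_contra h
    push_neg at h
    nlinarith [mul_nonneg h.1 hqw, mul_nonneg h.2 hqy]
  rcases hcase with h|h
  · rcases le_or_gt pw 0 with h2|h2
    · nlinarith
    · have h3 : pw*qy < (-py)*qw := by nlinarith
      have h3a : 0 ≤ pw*qy := mul_nonneg h2.le hqy
      have h4a : (pw*qy)^2 < (py*qw)^2 := by nlinarith
      have e1 : (pw*dxy)^2 = (pw*py)^2 + (pw*qy)^2 := by linear_combination (-(pw^2)) * hy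
      have e2 : ((-py)*dwx)^2 = (pw*py)^2 + (py*qw)^2 := by linear_combination (-(py^2)) * hw
      have h5 : pw*dxy ≤ (-py)*dwx := by
        refine le_of_sq_le (by linarith) ?_
        exact mul_nonneg (by linarith) hdwx.le
      nlinarith
  · rcases le_or_gt py 0 with h2|h2
    · nlinarith
    · have h3 : py*qw < (-pw)*qy := by nlinarith
      have h3a : 0 ≤ py*qw := mul_nonneg h2.le hqw
      have h4a : (py*qw)^2 < (pw*qy)^2 := by nlinarith
      have e1 : (py*dwx)^2 = (py*pw)^2 + (py*qw)^2 := by linear_combination (-(py^2)) * hw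
      have e2 : ((-pw)*dxy)^2 = (py*pw)^2 + (pw*qy)^2 := by linear_combination (-(pw^2)) * hy
      have h5 : py*dwx ≤ (-pw)*dxy := by
        refine le_of_sq_le (by linarith) ?_
        exact mul_nonneg (by linarith) hdxy.le
      nlinarith

lemma aux_fallback {py pw qy qw aB dxy dwx b e : ℝ}
    (hqy : 0 ≤ qy) (hqw : 0 ≤ qw) (haB : 0 ≤ aB)
    (hy : py^2 + qy^2 = dxy^2) (hw : pw^2 + qw^2 = dwx^2)
    (hdxy : 0 < dxy) (hdwx : 0 < dwx)
    (hN : py*qw + pw*qy < 0)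
    (hb : Real.sqrt ((py-aB)^2 + qy^2) ≤ b)
    (he : Real.sqrt ((pw-aB)^2 + qw^2) ≤ e) :
    dxy + dwx ≤ b + e := by
  have hM : py*dwx + pw*dxy ≤ 0 := key_neg hqy hqw hy hw hdxy hdwx hN
  have hb' := cs_bound haB hy hdxy.le hb
  have he' := cs_bound haB hw hdwx.le he
  nlinarith [mul_le_mul_of_nonneg_right hb' hdwx.le,
    mul_le_mul_of_nonneg_right he' hdxy.le,
    mul_nonneg haB (neg_nonneg.mpr hM), mul_pos hdxy hdwx]

lemma radicand_nonneg {D u v py : ℝ} (hD : 0 < D)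
    (h2 : 2*D*py = u^2 + D^2 - v^2)
    (t1 : D ≤ u + v) (t2 : u ≤ D + v) (t3 : v ≤ u + D) (hu : 0 ≤ u) (hv : 0 ≤ v) :
    0 ≤ u^2 - py^2 := by
  have h2sq : 4*D^2*py^2 = (u^2+D^2-v^2)^2 := by
    linear_combination (2*D*py + (u^2+D^2-v^2)) * h2
  nlinarith [mul_nonneg (mul_nonneg (by linarith : (0:ℝ) ≤ v - u + D)
      (by linarith : (0:ℝ) ≤ v + u - D))
      (mul_nonneg (by linarith : (0:ℝ) ≤ u + D - v) (by linarith : (0:ℝ) ≤ u + D + v)),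
    mul_pos hD hD, sq_nonneg py]

lemma point_bound {L a c D aB py qy dxy dyz b : ℝ}
    (hL : 0 < L) (ha0 : 0 ≤ a) (hc0 : 0 ≤ c) (hac : a + c = L) (hLD : L ≤ D)
    (haBL : aB * L = a * D)
    (hy : py^2 + qy^2 = dxy^2)
    (hyz : (py - D)^2 + qy^2 = dyz^2)
    (hSb : c*dxy^2 + a*dyz^2 - a*c*L ≤ L*b^2) (hb0 : 0 ≤ b) :
    Real.sqrt ((py - aB)^2 + qy^2) ≤ b := by
  have key : L^2*b^2 - L^2*((py - aB)^2 + qy^2)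
      = L*(L*b^2 - (c*dxy^2 + a*dyz^2 - a*c*L)) + a*c*(D-L)*(D+L) := by
    linear_combination (-(L*c)) * hy + (-(L*a)) * hyz + (-(L*aB) + 2*L*py - a*D) * haBL +
      (L*(py^2+qy^2) - a*D^2) * hac
  have t1 : 0 ≤ L*(L*b^2 - (c*dxy^2 + a*dyz^2 - a*c*L)) :=
    mul_nonneg hL.le (by linarith)
  have t2 : 0 ≤ a*c*(D-L)*(D+L) := by
    apply mul_nonneg (mul_nonneg (mul_nonneg ha0 hc0) (by linarith)) (by linarith)
  have hsq : (py - aB)^2 + qy^2 ≤ b^2 := by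
    have h3 : L^2*((py - aB)^2 + qy^2) ≤ L^2*b^2 := by linarith
    exact le_of_mul_le_mul_left h3 (by positivity)
  calc Real.sqrt ((py - aB)^2 + qy^2) ≤ Real.sqrt (b^2) := Real.sqrt_le_sqrt hsq
    _ = b := Real.sqrt_sq hb0

/-- The 0-quadruple condition for a metric space. -/
def ZeroQuadruple (X : Type*) [MetricSpace X] : Prop :=
  ∀ (x y z w : X) (x' y' z' w' : EuclideanSpace ℝ (Fin 2)),
    (segment ℝ x' z' ∩ segment ℝ y' w').Nonempty →
    dist x y = ‖x' - y'‖ → dist y z = ‖y' - z'‖ → dist z w = ‖z' - w'‖ →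
    dist w x = ‖w' - x'‖ → dist x z = ‖x' - z'‖ →
    dist y w ≤ ‖y' - w'‖

theorem stmt_17 {X : Type*} [MetricSpace X] (hX : ZeroQuadruple X)
    (x y z w : X) (x' y' z' w' : EuclideanSpace ℝ (Fin 2))
    (h1 : dist x y ≤ ‖x' - y'‖) (h2 : dist y z ≤ ‖y' - z'‖)
    (h3 : dist z w ≤ ‖z' - w'‖) (h4 : dist w x ≤ ‖w' - x'‖)
    (h5 : ‖x' - z'‖ ≤ dist x z)
    (hint : (segment ℝ x' z' ∩ segment ℝ y' w').Nonempty) :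
    dist y w ≤ ‖y' - w'‖ := by
  obtain ⟨p, hp1, hp2⟩ := hint
  obtain ⟨t1, t2, ht1, ht2, hts, hpe⟩ := hp1
  obtain ⟨s1, s2, hs1, hs2, hss, hqe⟩ := hp2
  have ht1e : t1 = 1 - t2 := by linarith
  have hs1e : s1 = 1 - s2 := by linarith
  rw [ht1e] at hpe
  rw [hs1e] at hqe
  set dxy := dist x y with hdxy
  set dyz := dist y z with hdyz
  set dzw := dist z w with hdzw
  set dwx := dist w x with hdwx
  set D := dist x z with hD
  set L : ℝ := ‖x' - z'‖ with hLdef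
  set M : ℝ := ‖y' - w'‖ with hMdef
  set a : ℝ := ‖x' - p‖ with ha_def
  set b : ℝ := ‖y' - p‖ with hb_def
  set c : ℝ := ‖z' - p‖ with hc_def
  set ee : ℝ := ‖w' - p‖ with he_def
  have hdxy0 : 0 ≤ dxy := dist_nonneg
  have hdyz0 : 0 ≤ dyz := dist_nonneg
  have hdzw0 : 0 ≤ dzw := dist_nonneg
  have hdwx0 : 0 ≤ dwx := dist_nonneg
  have ha0 : 0 ≤ a := norm_nonneg _
  have hb0 : 0 ≤ b := norm_nonneg _
  have hc0 : 0 ≤ c := norm_nonneg _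
  have he0 : 0 ≤ ee := norm_nonneg _
  have ht2' : (0:ℝ) ≤ 1 - t2 := by linarith
  have hs2' : (0:ℝ) ≤ 1 - s2 := by linarith
  have hxp : x' - p = t2 • (x' - z') := by rw [← hpe]; module
  have hzp : z' - p = (1 - t2) • (z' - x') := by rw [← hpe]; module
  have hyp : y' - p = s2 • (y' - w') := by rw [← hqe]; module
  have hwp : w' - p = (1 - s2) • (w' - y') := by rw [← hqe]; module
  have ha : a = t2 * L := by
    rw [ha_def, hxp, norm_smul, Real.norm_eq_abs, abs_of_nonneg ht2, ← hLdef]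
  have hc : c = (1 - t2) * L := by
    rw [hc_def, hzp, norm_smul, Real.norm_eq_abs, abs_of_nonneg ht2', norm_sub_rev, ← hLdef]
  have hb : b = s2 * M := by
    rw [hb_def, hyp, norm_smul, Real.norm_eq_abs, abs_of_nonneg hs2, ← hMdef]
  have hee : ee = (1 - s2) * M := by
    rw [he_def, hwp, norm_smul, Real.norm_eq_abs, abs_of_nonneg hs2', norm_sub_rev, ← hMdef]
  have hL : L = a + c := by rw [ha, hc]; ring
  have hM : M = b + ee := by rw [hb, hee]; ring
  -- quadrilateral side bounds through p
  have hd1 : dxy ≤ a + b := by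
    refine h1.trans ?_
    rw [ha_def, hb_def, show x' - y' = (x' - p) - (y' - p) from by abel]
    exact norm_sub_le _ _
  have hd2 : dyz ≤ b + c := by
    refine h2.trans ?_
    rw [hb_def, hc_def, show y' - z' = (y' - p) - (z' - p) from by abel]
    exact norm_sub_le _ _
  have hd3 : dzw ≤ c + ee := by
    refine h3.trans ?_
    rw [hc_def, he_def, show z' - w' = (z' - p) - (w' - p) from by abel]
    exact norm_sub_le _ _
  have hd4 : dwx ≤ ee + a := by
    refine h4.trans ?_
    rw [he_def, ha_def, show w' - x' = (w' - p) - (x' - p) from by abel]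
    exact norm_sub_le _ _
  -- Stewart relations
  have hstY := stewart y' x' z' t2
  rw [hpe, ← hb_def, norm_sub_rev y' x', ← hLdef] at hstY
  have hstW := stewart w' x' z' t2
  rw [hpe, ← he_def, norm_sub_rev w' z', ← hLdef] at hstW
  have hb2 : L*b^2 = c*‖x' - y'‖^2 + a*‖y' - z'‖^2 - a*c*L := by
    rw [hstY, ha, hc]; ring
  have he2 : L*ee^2 = c*‖w' - x'‖^2 + a*‖z' - w'‖^2 - a*c*L := by
    rw [hstW, ha, hc]; ring
  have hsq1 : dxy^2 ≤ ‖x' - y'‖^2 := pow_le_pow_left₀ hdxy0 h1 2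
  have hsq2 : dyz^2 ≤ ‖y' - z'‖^2 := pow_le_pow_left₀ hdyz0 h2 2
  have hsq3 : dzw^2 ≤ ‖z' - w'‖^2 := pow_le_pow_left₀ hdzw0 h3 2
  have hsq4 : dwx^2 ≤ ‖w' - x'‖^2 := pow_le_pow_left₀ hdwx0 h4 2
  have hSb : c*dxy^2 + a*dyz^2 - a*c*L ≤ L*b^2 := by
    linarith [mul_le_mul_of_nonneg_left hsq1 hc0, mul_le_mul_of_nonneg_left hsq2 ha0, hb2]
  have hSe : c*dwx^2 + a*dzw^2 - a*c*L ≤ L*ee^2 := by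
    linarith [mul_le_mul_of_nonneg_left hsq4 hc0, mul_le_mul_of_nonneg_left hsq3 ha0, he2]
  have hL0 : 0 ≤ L := norm_nonneg _
  have hLD : L ≤ D := h5
  clear_value dxy dyz dzw dwx D L M a b c ee
  clear ht1 ht2 hts hs1 hs2 hss ht1e hs1e ht2' hs2' hpe hqe hxp hzp hyp hwp
  clear ha hb hc hee hstY hstW hb2 he2 hsq1 hsq2 hsq3 hsq4 h1 h2 h3 h4 h5
  clear ha_def hb_def hc_def he_def hLdef hMdef t1 t2 s1 s2 p x' y' z' w'
  rcases hL0.eq_or_lt with hLz | hLpos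
  · -- degenerate: x' = z' = p
    have haz : a = 0 := by linarith [hL]
    calc dist y w ≤ dist y x + dist x w := dist_triangle y x w
      _ = dxy + dwx := by rw [dist_comm y x, dist_comm x w, hdxy, hdwx]
      _ ≤ (a + b) + (ee + a) := add_le_add hd1 hd4
      _ = M := by rw [hM, haz]; ring
  · -- main case: 0 < L
    have hD0 : 0 < D := lt_of_lt_of_le hLpos hLD
    have hDne : D ≠ 0 := ne_of_gt hD0
    have tya : D ≤ dxy + dyz := by
      have h6 := dist_triangle x y z
      rw [← hdxy, ← hdyz, ← hD] at h6
      linarith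
    have tyb : dxy ≤ D + dyz := by
      have h6 := dist_triangle x z y
      rw [dist_comm z y, ← hdxy, ← hdyz, ← hD] at h6
      linarith
    have tyc : dyz ≤ dxy + D := by
      have h6 := dist_triangle y x z
      rw [dist_comm y x, ← hdxy, ← hdyz, ← hD] at h6
      linarith
    have twa : D ≤ dwx + dzw := by
      have h6 := dist_triangle x w z
      rw [dist_comm x w, dist_comm w z, ← hdwx, ← hdzw, ← hD] at h6
      linarith
    have twb : dwx ≤ D + dzw := by
      have h6 := dist_triangle w z x
      rw [dist_comm w z, dist_comm z x, ← hdwx, ← hdzw, ← hD] at h6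
      linarith
    have twc : dzw ≤ dwx + D := by
      have h6 := dist_triangle z x w
      rw [dist_comm z x, dist_comm x w, ← hdwx, ← hdzw, ← hD] at h6
      linarith
    set py : ℝ := (dxy^2 + D^2 - dyz^2)/(2*D) with hpy_def
    set pw : ℝ := (dwx^2 + D^2 - dzw^2)/(2*D) with hpw_def
    clear_value py pw
    have h2Dpy : 2*D*py = dxy^2 + D^2 - dyz^2 := by rw [hpy_def]; field_simp
    have h2Dpw : 2*D*pw = dwx^2 + D^2 - dzw^2 := by rw [hpw_def]; field_simp
    have hry : 0 ≤ dxy^2 - py^2 := radicand_nonneg hD0 h2Dpy tya tyb tyc hdxy0 hdyz0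
    have hrw : 0 ≤ dwx^2 - pw^2 := radicand_nonneg hD0 h2Dpw twa twb twc hdwx0 hdzw0
    set qy : ℝ := Real.sqrt (dxy^2 - py^2) with hqy_def
    set qw : ℝ := Real.sqrt (dwx^2 - pw^2) with hqw_def
    clear_value qy qw
    have hqy0 : 0 ≤ qy := by rw [hqy_def]; exact Real.sqrt_nonneg _
    have hqw0 : 0 ≤ qw := by rw [hqw_def]; exact Real.sqrt_nonneg _
    have hy : py^2 + qy^2 = dxy^2 := by rw [hqy_def, Real.sq_sqrt hry]; ring
    have hw : pw^2 + qw^2 = dwx^2 := by rw [hqw_def, Real.sq_sqrt hrw]; ring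
    have hyz : (py - D)^2 + qy^2 = dyz^2 := by linear_combination hy - h2Dpy
    have hwz : (pw - D)^2 + qw^2 = dzw^2 := by linear_combination hw - h2Dpw
    set aB : ℝ := a*D/L with haB_def
    clear_value aB
    have hLne : L ≠ 0 := ne_of_gt hLpos
    have haBL : aB * L = a*D := by rw [haB_def]; field_simp
    have haB0 : 0 ≤ aB := by
      rw [haB_def]
      exact div_nonneg (mul_nonneg ha0 hD0.le) hL0
    have haBD : aB ≤ D := by
      have h6 : a ≤ L := by linarith
      rw [haB_def, div_le_iff₀ hLpos, mul_comm D L]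
      exact mul_le_mul_of_nonneg_right h6 hD0.le
    have hbU : Real.sqrt ((py - aB)^2 + qy^2) ≤ b :=
      point_bound hLpos ha0 hc0 hL.symm hLD haBL hy hyz hSb hb0
    have heU : Real.sqrt ((pw - aB)^2 + qw^2) ≤ ee :=
      point_bound hLpos ha0 hc0 hL.symm hLD haBL hw hwz hSe he0
    have hfin : (segment ℝ (pt 0 0) (pt D 0) ∩
        segment ℝ (pt py qy) (pt pw (-qw))).Nonempty → dist y w ≤ M := by
      intro hne
      have e1 : dist x y = ‖pt 0 0 - pt py qy‖ := by
        rw [norm_pt_sub, show (0 - py)^2 + (0 - qy)^2 = dxy^2 from by linear_combination hy,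
          Real.sqrt_sq hdxy0, hdxy]
      have e2 : dist y z = ‖pt py qy - pt D 0‖ := by
        rw [norm_pt_sub, show (py - D)^2 + (qy - 0)^2 = dyz^2 from by linear_combination hyz,
          Real.sqrt_sq hdyz0, hdyz]
      have e3 : dist z w = ‖pt D 0 - pt pw (-qw)‖ := by
        rw [norm_pt_sub, show (D - pw)^2 + (0 - -qw)^2 = dzw^2 from by linear_combination hwz,
          Real.sqrt_sq hdzw0, hdzw]
      have e4 : dist w x = ‖pt pw (-qw) - pt 0 0‖ := by
        rw [norm_pt_sub, show (pw - 0)^2 + (-qw - 0)^2 = dwx^2 from by linear_combination hw,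
          Real.sqrt_sq hdwx0, hdwx]
      have e5 : dist x z = ‖pt 0 0 - pt D 0‖ := by
        rw [norm_pt_sub, show (0 - D)^2 + ((0:ℝ) - 0)^2 = D^2 from by ring,
          Real.sqrt_sq hD0.le, hD]
      have h6 := hX x y z w (pt 0 0) (pt py qy) (pt D 0) (pt pw (-qw)) hne e1 e2 e3 e4 e5
      have htr : ‖pt py qy - pt pw (-qw)‖ ≤ ‖pt py qy - pt aB 0‖ + ‖pt aB 0 - pt pw (-qw)‖ := by
        have h7 := dist_triangle (pt py qy) (pt aB 0) (pt pw (-qw))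
        simpa [dist_eq_norm] using h7
      have hA : ‖pt py qy - pt aB 0‖ ≤ b := by
        rw [norm_pt_sub, show (py - aB)^2 + (qy - 0)^2 = (py - aB)^2 + qy^2 from by ring]
        exact hbU
      have hB : ‖pt aB 0 - pt pw (-qw)‖ ≤ ee := by
        rw [norm_pt_sub, show (aB - pw)^2 + (0 - -qw)^2 = (pw - aB)^2 + qw^2 from by ring]
        exact heU
      calc dist y w ≤ ‖pt py qy - pt pw (-qw)‖ := h6
        _ ≤ b + ee := by linarith
        _ = M := hM.symm
    rcases (add_nonneg hqy0 hqw0).eq_or_lt with hS | hS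
    · -- degenerate: all four points on a line
      have hqyz : qy = 0 := by linarith
      have hqwz : qw = 0 := by linarith
      rcases le_or_gt 0 py with hpy0 | hpy0
      · rcases le_or_gt py D with hpyD | hpyD
        · -- Y on the segment
          apply hfin
          refine ⟨pt py qy, ?_, left_mem_segment ℝ _ _⟩
          have h8 := mem_seg_pt 0 0 D 0 (1 - py/D) (py/D)
            (by rw [sub_nonneg]; exact (div_le_one hD0).mpr hpyD)
            (div_nonneg hpy0 hD0.le) (by field_simp; ring)
          rw [show (1 - py/D)*0 + (py/D)*D = py from by field_simp; ring,
            show (1 - py/D)*0 + (py/D)*0 = 0 from by ring] at h8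
          rw [hqyz]
          exact h8
        · -- py > D
          rcases le_or_gt 0 pw with hpw0 | hpw0
          · rcases le_or_gt pw D with hpwD | hpwD
            · -- W on the segment
              apply hfin
              refine ⟨pt pw (-qw), ?_, right_mem_segment ℝ _ _⟩
              have h8 := mem_seg_pt 0 0 D 0 (1 - pw/D) (pw/D)
                (by rw [sub_nonneg]; exact (div_le_one hD0).mpr hpwD)
                (div_nonneg hpw0 hD0.le) (by field_simp; ring)
              rw [show (1 - pw/D)*0 + (pw/D)*D = pw from by field_simp; ring,
                show (1 - pw/D)*0 + (pw/D)*0 = 0 from by ring] at h8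
              rw [hqwz, neg_zero]
              exact h8
            · -- py > D and pw > D : go through z
              have hdyz_eq : dyz = py - D := by
                have h8 : (py - D - dyz)*(py - D + dyz) = 0 := by
                  linear_combination hyz - qy * hqyz
                rcases mul_eq_zero.mp h8 with h9 | h9
                · linarith
                · linarith
              have hdzw_eq : dzw = pw - D := by
                have h8 : (pw - D - dzw)*(pw - D + dzw) = 0 := by
                  linear_combination hwz - qw * hqwz
                rcases mul_eq_zero.mp h8 with h9 | h9
                · linarith
                · linarith
              have habs : |py - aB| ≤ b := by
                have h8 := hbU
                rw [hqyz] at h8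
                rwa [show (py - aB)^2 + 0^2 = (py - aB)^2 from by ring,
                  Real.sqrt_sq_eq_abs] at h8
              have habs2 : |pw - aB| ≤ ee := by
                have h8 := heU
                rw [hqwz] at h8
                rwa [show (pw - aB)^2 + 0^2 = (pw - aB)^2 from by ring,
                  Real.sqrt_sq_eq_abs] at h8
              have hyb : dyz ≤ b := by
                have h8 := le_abs_self (py - aB)
                linarith
              have hwe : dzw ≤ ee := by
                have h8 := le_abs_self (pw - aB)
                linarith
              calc dist y w ≤ dist y z + dist z w := dist_triangle y z w
                _ = dyz + dzw := by rw [hdyz, hdzw]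
                _ ≤ b + ee := add_le_add hyb hwe
                _ = M := hM.symm
          · -- py > D, pw < 0 : segments cross at the origin
            apply hfin
            refine ⟨pt 0 0, left_mem_segment ℝ _ _, ?_⟩
            have hdne : pw - py < 0 := by linarith
            have h8 := mem_seg_pt py qy pw (-qw) (pw/(pw - py)) ((-py)/(pw - py))
              (div_nonneg_iff.mpr (Or.inr ⟨hpw0.le, hdne.le⟩))
              (div_nonneg_iff.mpr (Or.inr ⟨by linarith, hdne.le⟩))
              (by rw [← add_div, show pw + -py = pw - py from by ring,
                div_self hdne.ne])
            rw [show (pw/(pw - py))*py + ((-py)/(pw - py))*pw = 0 from by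
                rw [div_mul_eq_mul_div, div_mul_eq_mul_div, ← add_div,
                  show pw*py + -py*pw = 0 from by ring, zero_div],
              show (pw/(pw - py))*qy + ((-py)/(pw - py))*(-qw) = 0 from by
                rw [hqyz, hqwz]; ring] at h8
            exact h8
      · -- py < 0
        rcases le_or_gt 0 pw with hpw0 | hpw0
        · rcases le_or_gt pw D with hpwD | hpwD
          · -- W on the segment
            apply hfin
            refine ⟨pt pw (-qw), ?_, right_mem_segment ℝ _ _⟩
            have h8 := mem_seg_pt 0 0 D 0 (1 - pw/D) (pw/D)
              (by rw [sub_nonneg]; exact (div_le_one hD0).mpr hpwD)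
              (div_nonneg hpw0 hD0.le) (by field_simp; ring)
            rw [show (1 - pw/D)*0 + (pw/D)*D = pw from by field_simp; ring,
              show (1 - pw/D)*0 + (pw/D)*0 = 0 from by ring] at h8
            rw [hqwz, neg_zero]
            exact h8
          · -- py < 0, pw > D : segments cross at the origin
            apply hfin
            refine ⟨pt 0 0, left_mem_segment ℝ _ _, ?_⟩
            have hdpos : 0 < pw - py := by linarith
            have h8 := mem_seg_pt py qy pw (-qw) (pw/(pw - py)) ((-py)/(pw - py))
              (div_nonneg (by linarith) hdpos.le)
              (div_nonneg (by linarith) hdpos.le)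
              (by rw [← add_div, show pw + -py = pw - py from by ring,
                div_self hdpos.ne'])
            rw [show (pw/(pw - py))*py + ((-py)/(pw - py))*pw = 0 from by
                rw [div_mul_eq_mul_div, div_mul_eq_mul_div, ← add_div,
                  show pw*py + -py*pw = 0 from by ring, zero_div],
              show (pw/(pw - py))*qy + ((-py)/(pw - py))*(-qw) = 0 from by
                rw [hqyz, hqwz]; ring] at h8
            exact h8
        · -- py < 0 and pw < 0 : go through x
          have hdxy_eq : dxy = -py := by
            have h8 : (py - dxy)*(py + dxy) = 0 := by
              linear_combination hy - qy * hqyz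
            rcases mul_eq_zero.mp h8 with h9 | h9
            · linarith
            · linarith
          have hdwx_eq : dwx = -pw := by
            have h8 : (pw - dwx)*(pw + dwx) = 0 := by
              linear_combination hw - qw * hqwz
            rcases mul_eq_zero.mp h8 with h9 | h9
            · linarith
            · linarith
          have habs : |py - aB| ≤ b := by
            have h8 := hbU
            rw [hqyz] at h8
            rwa [show (py - aB)^2 + 0^2 = (py - aB)^2 from by ring,
              Real.sqrt_sq_eq_abs] at h8
          have habs2 : |pw - aB| ≤ ee := by
            have h8 := heU
            rw [hqwz] at h8
            rwa [show (pw - aB)^2 + 0^2 = (pw - aB)^2 from by ring,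
              Real.sqrt_sq_eq_abs] at h8
          have hxb : dxy ≤ b := by
            have h8 := neg_le_abs (py - aB)
            linarith
          have hxe : dwx ≤ ee := by
            have h8 := neg_le_abs (pw - aB)
            linarith
          calc dist y w ≤ dist y x + dist x w := dist_triangle y x w
            _ = dxy + dwx := by rw [dist_comm y x, dist_comm x w, hdxy, hdwx]
            _ ≤ b + ee := add_le_add hxb hxe
            _ = M := hM.symm
    · -- generic case: qy + qw > 0
      set m1 : ℝ := (py*qw + pw*qy)/(qy + qw) with hm1_def
      clear_value m1
      have hSne : qy + qw ≠ 0 := ne_of_gt hS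
      have hm1S : m1 * (qy + qw) = py*qw + pw*qy := by rw [hm1_def]; field_simp
      rcases le_or_gt 0 m1 with hm1a | hm1a
      · rcases le_or_gt m1 D with hm1b | hm1b
        · -- crossing case
          apply hfin
          refine ⟨pt m1 0, ?_, ?_⟩
          · have h8 := mem_seg_pt 0 0 D 0 (1 - m1/D) (m1/D)
              (by rw [sub_nonneg]; exact (div_le_one hD0).mpr hm1b)
              (div_nonneg hm1a hD0.le) (by field_simp; ring)
            rwa [show (1 - m1/D)*0 + (m1/D)*D = m1 from by field_simp; ring,
              show (1 - m1/D)*0 + (m1/D)*0 = 0 from by ring] at h8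
          · have h8 := mem_seg_pt py qy pw (-qw) (qw/(qy+qw)) (qy/(qy+qw))
              (div_nonneg hqw0 hS.le) (div_nonneg hqy0 hS.le)
              (by rw [← add_div]; rw [add_comm qw qy]; exact div_self hSne)
            rwa [show (qw/(qy+qw))*py + (qy/(qy+qw))*pw = m1 from by
                rw [hm1_def]; field_simp,
              show (qw/(qy+qw))*qy + (qy/(qy+qw))*(-qw) = 0 from by
                field_simp; ring] at h8
        · -- m1 > D : fallback through z
          have hN : (D - py)*qw + (D - pw)*qy < 0 := by
            have h8 := mul_lt_mul_of_pos_right hm1b hS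
            rw [hm1S] at h8
            ring_nf at h8 ⊢
            linarith
          have hdyzpos : 0 < dyz := by
            rcases hdyz0.eq_or_lt with h0 | h0
            · exfalso
              have hdyz_z : dyz = 0 := h0.symm
              have hyz0 : y = z := dist_eq_zero.mp (by rw [← hdyz]; exact hdyz_z)
              have hxyD : dxy = D := by rw [hdxy, hD, hyz0]
              have h9 : py = D := by
                rw [hpy_def, hxyD, hdyz_z, div_eq_iff (mul_ne_zero two_ne_zero hDne)]; ring
              have h10 : qy = 0 := by rw [hqy_def, hxyD, h9]; simp
              rw [h9, h10] at hN
              ring_nf at hN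
              linarith
            · exact h0
          have hdzwpos : 0 < dzw := by
            rcases hdzw0.eq_or_lt with h0 | h0
            · exfalso
              have hdzw_z : dzw = 0 := h0.symm
              have hzw0 : z = w := dist_eq_zero.mp (by rw [← hdzw]; exact hdzw_z)
              have hwxD : dwx = D := by
                rw [hdwx, hD, ← hzw0, dist_comm z x]
              have h9 : pw = D := by
                rw [hpw_def, hwxD, hdzw_z, div_eq_iff (mul_ne_zero two_ne_zero hDne)]; ring
              have h10 : qw = 0 := by rw [hqw_def, hwxD, h9]; simp
              rw [h9, h10] at hN
              ring_nf at hN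
              linarith
            · exact h0
          have hyz2 : (D - py)^2 + qy^2 = dyz^2 := by linear_combination hyz
          have hwz2 : (D - pw)^2 + qw^2 = dzw^2 := by linear_combination hwz
          have hb2 : Real.sqrt ((D - py - (D - aB))^2 + qy^2) ≤ b := by
            rw [show (D - py - (D - aB))^2 + qy^2 = (py - aB)^2 + qy^2 from by ring]
            exact hbU
          have he2 : Real.sqrt ((D - pw - (D - aB))^2 + qw^2) ≤ ee := by
            rw [show (D - pw - (D - aB))^2 + qw^2 = (pw - aB)^2 + qw^2 from by ring]
            exact heU
          have hfb := aux_fallback hqy0 hqw0 (show (0:ℝ) ≤ D - aB from by linarith)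
            hyz2 hwz2 hdyzpos hdzwpos hN hb2 he2
          calc dist y w ≤ dist y z + dist z w := dist_triangle y z w
            _ = dyz + dzw := by rw [hdyz, hdzw]
            _ ≤ b + ee := hfb
            _ = M := hM.symm
      · -- m1 < 0 : fallback through x
        have hN : py*qw + pw*qy < 0 := by
          have h8 := mul_lt_mul_of_pos_right hm1a hS
          rw [hm1S] at h8
          rw [zero_mul] at h8
          exact h8
        have hdxypos : 0 < dxy := by
          rcases hdxy0.eq_or_lt with h0 | h0
          · exfalso
            have hdxy_z : dxy = 0 := h0.symm
            have hxy0 : x = y := dist_eq_zero.mp (by rw [← hdxy]; exact hdxy_z)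
            have hdyzD : dyz = D := by rw [hdyz, hD, hxy0]
            have h9 : py = 0 := by
              rw [hpy_def, hdxy_z, hdyzD, div_eq_iff (mul_ne_zero two_ne_zero hDne)]; ring
            have h10 : qy = 0 := by rw [hqy_def, hdxy_z, h9]; simp
            rw [h9, h10] at hN
            ring_nf at hN
            linarith
          · exact h0
        have hdwxpos : 0 < dwx := by
          rcases hdwx0.eq_or_lt with h0 | h0
          · exfalso
            have hdwx_z : dwx = 0 := h0.symm
            have hwx0 : w = x := dist_eq_zero.mp (by rw [← hdwx]; exact hdwx_z)
            have hdzwD : dzw = D := by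
              rw [hdzw, hD, hwx0, dist_comm z x]
            have h9 : pw = 0 := by
              rw [hpw_def, hdwx_z, hdzwD, div_eq_iff (mul_ne_zero two_ne_zero hDne)]; ring
            have h10 : qw = 0 := by rw [hqw_def, hdwx_z, h9]; simp
            rw [h9, h10] at hN
            ring_nf at hN
            linarith
          · exact h0
        have hfb := aux_fallback hqy0 hqw0 haB0 hy hw hdxypos hdwxpos hN hbU heU
        calc dist y w ≤ dist y x + dist x w := dist_triangle y x w
          _ = dxy + dwx := by rw [dist_comm y x, dist_comm x w, hdxy, hdwx]
          _ ≤ b + ee := hfb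
          _ = M := hM.symm
end
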